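/- If G is a simple edge-Δ-critical graph and xy ∈ E(G), then d(x) + d(y) ≥ Δ + 2. -/

import Mathlib

open Finset
open scoped Classical

variable {V : Type*}

/-- `φ` is a proper edge coloring of `G` using colors `{1,…,k}`. -/
def IsProperEdgeColoring (G : SimpleGraph V) (k : ℕ) (φ : Sym2 V → ℕ) : Prop :=
  (∀ e ∈ G.edgeSet, φ e ∈ Finset.Icc 1 k) ∧
  ∀ e ∈ G.edgeSet, ∀ f ∈ G.edgeSet, e ≠ f → (∃ v, v ∈ e ∧ v ∈ f) → φ e ≠ φ f

/-- The set of colors of `{1,…,k}` missing at `v` under `φ`. -/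
noncomputable def missing (G : SimpleGraph V) (k : ℕ) (φ : Sym2 V → ℕ) (v : V) : Finset ℕ :=
  (Finset.Icc 1 k).filter (fun c => ∀ u, G.Adj v u → φ s(v, u) ≠ c)

/-- `G` is edge-`Δ`-critical: max degree `Δ`, `χ' = Δ+1`, and every proper
subgraph is edge-`Δ`-colorable. -/
def EdgeCritical (G : SimpleGraph V) [Fintype V] (Δ : ℕ) : Prop :=
  G.maxDegree = Δ ∧
  ¬ (∃ φ, IsProperEdgeColoring G Δ φ) ∧
  (∃ φ, IsProperEdgeColoring G (Δ + 1) φ) ∧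
  ∀ H : SimpleGraph V, H < G → ∃ φ, IsProperEdgeColoring H Δ φ

/-!
Colour `G - xy` with `Δ` colours. A colour missing at both `x` and `y` could be given to `xy`,
colouring `G` with `Δ` colours; so the missing sets at `x` and `y` are disjoint subsets of
`{1,…,Δ}`. In `G - xy` the vertex `x` has degree `d(x) - 1`, so at least `Δ - d(x) + 1` colours
are missing there, and likewise at `y`. Hence `(Δ - d(x) + 1) + (Δ - d(y) + 1) ≤ Δ`.
-/

namespace SimpleGraph

lemma deleteEdges_lt_of_adj {G : SimpleGraph V} {x y : V} (hxy : G.Adj x y) :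
    G.deleteEdges {s(x, y)} < G :=
  (deleteEdges_le _).lt_of_ne fun h => by
    rw [← h] at hxy
    simp at hxy

lemma degree_deleteEdges_add_one {G : SimpleGraph V} {x y : V} [Fintype (G.neighborSet x)]
    [Fintype ((G.deleteEdges {s(x, y)}).neighborSet x)] (hxy : G.Adj x y) :
    (G.deleteEdges {s(x, y)}).degree x + 1 = G.degree x := by
  have hnbr : (G.deleteEdges {s(x, y)}).neighborFinset x = (G.neighborFinset x).erase y := by
    ext u
    simp only [mem_neighborFinset, deleteEdges_adj, Set.mem_singleton_iff, Sym2.congr_right,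
      mem_erase, ne_eq, and_comm]
  rw [← card_neighborFinset_eq_degree, ← card_neighborFinset_eq_degree, hnbr,
    card_erase_add_one ((mem_neighborFinset _ _ _).2 hxy)]

end SimpleGraph

open SimpleGraph

lemma missing_subset_Icc (G : SimpleGraph V) (k : ℕ) (φ : Sym2 V → ℕ) (v : V) :
    missing G k φ v ⊆ Icc 1 k :=
  filter_subset _ _

lemma mem_missing {G : SimpleGraph V} {k : ℕ} {φ : Sym2 V → ℕ} {v : V} {c : ℕ} :
    c ∈ missing G k φ v ↔ c ∈ Icc 1 k ∧ ∀ u, G.Adj v u → φ s(v, u) ≠ c := by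
  simp only [missing, mem_filter]

lemma ne_of_mem_missing {G : SimpleGraph V} {k : ℕ} {φ : Sym2 V → ℕ} {v : V} {c : ℕ}
    (hc : c ∈ missing G k φ v) {e : Sym2 V} (he : e ∈ G.edgeSet) (hve : v ∈ e) : φ e ≠ c := by
  induction e using Sym2.ind with
  | h a b =>
    rcases Sym2.mem_iff.1 hve with rfl | rfl
    · exact (mem_missing.1 hc).2 b he
    · rw [Sym2.eq_swap]
      exact (mem_missing.1 hc).2 a (G.adj_symm he)

lemma sub_degree_le_card_missing (G : SimpleGraph V) (k : ℕ) (φ : Sym2 V → ℕ) (v : V)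
    [Fintype (G.neighborSet v)] : k - G.degree v ≤ #(missing G k φ v) := by
  have hsub : Icc 1 k \ (G.neighborFinset v).image (fun u => φ s(v, u)) ⊆ missing G k φ v :=
    fun c hc => mem_missing.2 ⟨(mem_sdiff.1 hc).1, fun u hu hφ =>
      (mem_sdiff.1 hc).2 (mem_image.2 ⟨u, (mem_neighborFinset _ _ _).2 hu, hφ⟩)⟩
  calc k - G.degree v
      ≤ #(Icc 1 k) - #((G.neighborFinset v).image (fun u => φ s(v, u))) := by
        rw [Nat.card_Icc, Nat.add_sub_cancel, ← card_neighborFinset_eq_degree]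
        exact Nat.sub_le_sub_left card_image_le _
    _ ≤ #(Icc 1 k \ (G.neighborFinset v).image (fun u => φ s(v, u))) := le_card_sdiff _ _
    _ ≤ #(missing G k φ v) := card_le_card hsub

lemma card_missing_add_card_missing_le {G : SimpleGraph V} {k : ℕ} {φ : Sym2 V → ℕ} {u v : V}
    (h : Disjoint (missing G k φ u) (missing G k φ v)) :
    #(missing G k φ u) + #(missing G k φ v) ≤ k := by
  rw [← card_union_of_disjoint h]
  simpa using card_le_card (union_subset (missing_subset_Icc G k φ u) (missing_subset_Icc G k φ v))

lemma IsProperEdgeColoring.update_of_mem_missing {G : SimpleGraph V} {k : ℕ}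
    {φ : Sym2 V → ℕ} {x y : V} {c : ℕ}
    (hφ : IsProperEdgeColoring (G.deleteEdges {s(x, y)}) k φ)
    (hx : c ∈ missing (G.deleteEdges {s(x, y)}) k φ x)
    (hy : c ∈ missing (G.deleteEdges {s(x, y)}) k φ y) :
    IsProperEdgeColoring G k (Function.update φ s(x, y) c) := by
  have hH : ∀ {e}, e ∈ G.edgeSet → e ≠ s(x, y) → e ∈ (G.deleteEdges {s(x, y)}).edgeSet :=
    fun he hne => by simp [edgeSet_deleteEdges, he, hne]
  have hfree : ∀ {v e}, v ∈ s(x, y) → e ∈ G.edgeSet → e ≠ s(x, y) → v ∈ e → φ e ≠ c := by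
    intro v e hv he hne hve
    rcases Sym2.mem_iff.1 hv with rfl | rfl
    exacts [ne_of_mem_missing hx (hH he hne) hve, ne_of_mem_missing hy (hH he hne) hve]
  refine ⟨fun e he => ?_, fun e he f hf hef ⟨v, hve, hvf⟩ => ?_⟩
  · by_cases h : e = s(x, y)
    · simpa [h] using missing_subset_Icc _ _ _ _ hx
    · simpa [h] using hφ.1 e (hH he h)
  · by_cases h₁ : e = s(x, y) <;> by_cases h₂ : f = s(x, y)
    · exact absurd (h₁.trans h₂.symm) hef
    · subst h₁
      simpa [h₂] using (hfree hve hf h₂ hvf).symm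
    · subst h₂
      simpa [h₁] using hfree hvf he h₁ hve
    · simpa [h₁, h₂] using hφ.2 e (hH he h₁) f (hH hf h₂) hef ⟨v, hve, hvf⟩

lemma disjoint_missing_of_not_colorable {G : SimpleGraph V} {k : ℕ} {φ : Sym2 V → ℕ} {x y : V}
    (hG : ¬ ∃ ψ, IsProperEdgeColoring G k ψ)
    (hφ : IsProperEdgeColoring (G.deleteEdges {s(x, y)}) k φ) :
    Disjoint (missing (G.deleteEdges {s(x, y)}) k φ x) (missing (G.deleteEdges {s(x, y)}) k φ y) :=
  disjoint_left.2 fun _ hx hy => hG ⟨_, hφ.update_of_mem_missing hx hy⟩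

theorem stmt2 (G : SimpleGraph V) [Fintype V] (Δ : ℕ) (hc : EdgeCritical G Δ)
    (x y : V) (hxy : G.Adj x y) :
    Δ + 2 ≤ G.degree x + G.degree y := by
  obtain ⟨hΔ, hG, -, hcrit⟩ := hc
  obtain ⟨φ, hφ⟩ := hcrit _ (deleteEdges_lt_of_adj hxy)
  have hmiss := card_missing_add_card_missing_le (disjoint_missing_of_not_colorable hG hφ)
  have hmx := sub_degree_le_card_missing (G.deleteEdges {s(x, y)}) Δ φ x
  have hmy := sub_degree_le_card_missing (G.deleteEdges {s(x, y)}) Δ φ y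
  have hdx := degree_deleteEdges_add_one hxy
  have hdy := degree_deleteEdges_add_one hxy.symm
  rw [Sym2.eq_swap] at hdy
  have hx := hΔ ▸ G.degree_le_maxDegree x
  have hy := hΔ ▸ G.degree_le_maxDegree y
  omega
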